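/- arXiv:2212.06500 — 2 statements merged into one kernel-verified Lean document; each statement's English description precedes it below -/
import Mathlib

section
/- Let Y, V be Banach spaces and Z = [Y ⊕ V]_{ℓ_q} for 1 ≤ q ≤ ∞. Given 𝒯_Y = (A_1,...,A_k) ∈ L(Y)^k with ‖𝒯_Y‖_p = 1, define T_i ∈ L(Z) by T_i(y,v) = (A_i y, 0), and 𝒯_Z = (T_1,...,T_k). Then ‖𝒯_Z‖_p = ‖𝒯_Y‖_p = 1 and w_p(𝒯_Z) = w_p(𝒯_Y). Consequently n_{(p,k)}(Z) ≤ n_{(p,k)}(Y). -/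
open scoped ENNReal

noncomputable section

/-- The set Π_X of pairs (x, x*) with ‖x‖ = 1, ‖x*‖ = 1 and x*(x) = 1. -/
def dualPairs (𝕜 X : Type*) [RCLike 𝕜] [NormedAddCommGroup X] [NormedSpace 𝕜 X] :
    Set (X × (X →L[𝕜] 𝕜)) :=
  {q | ‖q.1‖ = 1 ∧ ‖q.2‖ = 1 ∧ q.2 q.1 = 1}

/-- Numerical range of an operator. -/
def numRange {𝕜 X : Type*} [RCLike 𝕜] [NormedAddCommGroup X] [NormedSpace 𝕜 X]
    (T : X →L[𝕜] X) : Set 𝕜 :=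
  {c | ∃ q ∈ dualPairs 𝕜 X, c = q.2 (T q.1)}

/-- Numerical radius of an operator. -/
def numRadius {𝕜 X : Type*} [RCLike 𝕜] [NormedAddCommGroup X] [NormedSpace 𝕜 X]
    (T : X →L[𝕜] X) : ℝ :=
  sSup {r | ∃ q ∈ dualPairs 𝕜 X, r = ‖q.2 (T q.1)‖}

/-- Joint numerical range of a k-tuple of operators. -/
def jointNumRange {𝕜 X : Type*} [RCLike 𝕜] [NormedAddCommGroup X] [NormedSpace 𝕜 X]
    {k : ℕ} (T : Fin k → X →L[𝕜] X) : Set (Fin k → 𝕜) :=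
  {v | ∃ q ∈ dualPairs 𝕜 X, v = fun i => q.2 (T i q.1)}

/-- The p-th joint numerical radius of a k-tuple of operators. -/
def jointNumRadius {𝕜 X : Type*} [RCLike 𝕜] [NormedAddCommGroup X] [NormedSpace 𝕜 X]
    (p : ℝ) {k : ℕ} (T : Fin k → X →L[𝕜] X) : ℝ :=
  sSup {r | ∃ q ∈ dualPairs 𝕜 X, r = (∑ i, ‖q.2 (T i q.1)‖ ^ p) ^ (1 / p)}

/-- The p-th joint operator norm of a k-tuple of operators. -/
def jointOpNorm {𝕜 X Y : Type*} [RCLike 𝕜] [NormedAddCommGroup X] [NormedSpace 𝕜 X]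
    [NormedAddCommGroup Y] [NormedSpace 𝕜 Y]
    (p : ℝ) {k : ℕ} (T : Fin k → X →L[𝕜] Y) : ℝ :=
  sSup {r | ∃ x : X, ‖x‖ = 1 ∧ r = (∑ i, ‖T i x‖ ^ p) ^ (1 / p)}

/-- The numerical index of a space. -/
def numIndex (𝕜 X : Type*) [RCLike 𝕜] [NormedAddCommGroup X] [NormedSpace 𝕜 X] : ℝ :=
  sInf {r | ∃ T : X →L[𝕜] X, ‖T‖ = 1 ∧ r = numRadius T}

/-- The (p,k)-th joint numerical index of a space. -/
def jointNumIndex (p : ℝ) (k : ℕ) (𝕜 X : Type*) [RCLike 𝕜] [NormedAddCommGroup X]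
    [NormedSpace 𝕜 X] : ℝ :=
  sInf {r | ∃ T : Fin k → X →L[𝕜] X, jointOpNorm p T = 1 ∧ r = jointNumRadius p T}

/-! A norming pair `(z, z*)` of `Z = [Y ⊕ V]_q` splits as `z* = (g, h)` with `g y + h v = 1`, while
`‖g‖ ‖y‖ + ‖h‖ ‖v‖ ≤ ‖z*‖ ‖z‖ = 1` (test `z*` on suitably rotated vectors). Hence `g y = ‖g‖ ‖y‖ ≤ 1`,
and since `z*(T_i z) = g (A_i y)`, normalising `(y, g)` gives a pair of `Π_Y` whose `p`-sum dominates
that of `(z, z*)`. Conversely `(y, y*) ∈ Π_Y` lifts to `((y, 0), y* ∘ π₁) ∈ Π_Z` with the same `p`-sum.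
The same lift and projection give `‖𝒯_Z‖_p = ‖𝒯_Y‖_p`, so `A ↦ A ⊕ 0` maps the tuples competing for
`n_(p,k)(Y)` to tuples competing for `n_(p,k)(Z)` with the same joint numerical radius. -/

open WithLp

section RpowSum

variable {p : ℝ} {k : ℕ}

lemma rpow_sum_rpow_mono (hp : 0 < p) {f g : Fin k → ℝ} (hf : ∀ i, 0 ≤ f i)
    (hfg : ∀ i, f i ≤ g i) : (∑ i, f i ^ p) ^ (1 / p) ≤ (∑ i, g i ^ p) ^ (1 / p) :=
  Real.rpow_le_rpow (Finset.sum_nonneg fun i _ => Real.rpow_nonneg (hf i) p)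
    (Finset.sum_le_sum fun i _ => Real.rpow_le_rpow (hf i) (hfg i) hp.le) (by positivity)

lemma rpow_sum_norm_smul_rpow {𝕜 E : Type*} [NormedField 𝕜] [SeminormedAddCommGroup E]
    [NormedSpace 𝕜 E] (hp : 0 < p) (c : 𝕜) (a : Fin k → E) :
    (∑ i, ‖c • a i‖ ^ p) ^ (1 / p) = ‖c‖ * (∑ i, ‖a i‖ ^ p) ^ (1 / p) := by
  simp_rw [norm_smul, Real.mul_rpow (norm_nonneg _) (norm_nonneg _), ← Finset.mul_sum]
  rw [Real.mul_rpow (by positivity) (by positivity), ← Real.rpow_mul (norm_nonneg _),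
    mul_one_div_cancel hp.ne', Real.rpow_one]

end RpowSum

section JointNorms

variable {𝕜 X Y : Type*} [RCLike 𝕜] [NormedAddCommGroup X] [NormedSpace 𝕜 X]
  [NormedAddCommGroup Y] [NormedSpace 𝕜 Y] {p : ℝ} {k : ℕ}

lemma mem_dualPairs_of_norm_le_one {x : X} {g : X →L[𝕜] 𝕜} (hx : ‖x‖ = 1) (hg : ‖g‖ ≤ 1)
    (hgx : g x = 1) : (x, g) ∈ dualPairs 𝕜 X :=
  ⟨hx, le_antisymm hg (by simpa [hx, hgx] using g.le_opNorm x), hgx⟩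

lemma jointOpNorm_nonneg (p : ℝ) (T : Fin k → X →L[𝕜] Y) : 0 ≤ jointOpNorm p T :=
  Real.sSup_nonneg <| by rintro r ⟨x, -, rfl⟩; positivity

lemma jointNumRadius_nonneg (p : ℝ) (T : Fin k → X →L[𝕜] X) : 0 ≤ jointNumRadius p T :=
  Real.sSup_nonneg <| by rintro r ⟨x, -, rfl⟩; positivity

lemma rpow_sum_le_jointOpNorm (hp : 0 < p) (T : Fin k → X →L[𝕜] Y) {x : X} (hx : ‖x‖ = 1) :
    (∑ i, ‖T i x‖ ^ p) ^ (1 / p) ≤ jointOpNorm p T := by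
  refine le_csSup ⟨(∑ i, ‖T i‖ ^ p) ^ (1 / p), ?_⟩ ⟨x, hx, rfl⟩
  rintro r ⟨x, hx, rfl⟩
  exact rpow_sum_rpow_mono hp (fun i => norm_nonneg _) fun i => (T i).unit_le_opNorm x hx.le

lemma rpow_sum_le_jointOpNorm_mul (hp : 0 < p) (T : Fin k → X →L[𝕜] Y) (x : X) :
    (∑ i, ‖T i x‖ ^ p) ^ (1 / p) ≤ jointOpNorm p T * ‖x‖ := by
  rcases eq_or_ne x 0 with rfl | hx
  · simp [Real.zero_rpow hp.ne', hp.ne']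
  set u := (‖x‖⁻¹ : 𝕜) • x
  have hscale : ∀ i, T i x = (‖x‖ : 𝕜) • T i u := fun i => by
    rw [← map_smul, smul_inv_smul₀ (by simpa using hx)]
  simp_rw [hscale, rpow_sum_norm_smul_rpow hp, RCLike.norm_ofReal, abs_norm]
  rw [mul_comm (jointOpNorm p T)]
  exact mul_le_mul_of_nonneg_left (rpow_sum_le_jointOpNorm hp T (norm_smul_inv_norm hx))
    (norm_nonneg x)

lemma rpow_sum_le_jointNumRadius (hp : 0 < p) (T : Fin k → X →L[𝕜] X) {x : X} {g : X →L[𝕜] 𝕜}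
    (hxg : (x, g) ∈ dualPairs 𝕜 X) :
    (∑ i, ‖g (T i x)‖ ^ p) ^ (1 / p) ≤ jointNumRadius p T := by
  refine le_csSup ⟨(∑ i, ‖T i‖ ^ p) ^ (1 / p), ?_⟩ ⟨(x, g), hxg, rfl⟩
  rintro r ⟨⟨x, g⟩, ⟨hx, hg, -⟩, rfl⟩
  refine rpow_sum_rpow_mono hp (fun i => norm_nonneg _) fun i => ?_
  calc ‖g (T i x)‖ ≤ ‖g‖ * (‖T i‖ * ‖x‖) := g.le_opNorm_of_le ((T i).le_opNorm x)
    _ = ‖T i‖ := by rw [hx, hg]; ring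

lemma rpow_sum_le_jointNumRadius_mul (hp : 0 < p) (T : Fin k → X →L[𝕜] X) {x : X}
    {g : X →L[𝕜] 𝕜} (hgx : g x = ((‖g‖ * ‖x‖ : ℝ) : 𝕜)) :
    (∑ i, ‖g (T i x)‖ ^ p) ^ (1 / p) ≤ ‖g‖ * ‖x‖ * jointNumRadius p T := by
  rcases eq_or_ne x 0 with rfl | hx
  · simp [Real.zero_rpow hp.ne', hp.ne']
  rcases eq_or_ne g 0 with rfl | hg
  · simp [Real.zero_rpow hp.ne', hp.ne']
  have hx' : (‖x‖ : 𝕜) ≠ 0 := by simpa using hx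
  have hg' : (‖g‖ : 𝕜) ≠ 0 := by simpa using hg
  set u := (‖x‖⁻¹ : 𝕜) • x
  set h := (‖g‖⁻¹ : 𝕜) • g
  have hpair : (u, h) ∈ dualPairs 𝕜 X := by
    refine ⟨norm_smul_inv_norm hx, norm_smul_inv_norm hg, ?_⟩
    simp only [u, h, map_smul, smul_apply, hgx, smul_eq_mul]
    push_cast
    field_simp
  have hscale : ∀ i, g (T i x) = ((‖g‖ * ‖x‖ : ℝ) : 𝕜) • h (T i u) := fun i => by
    simp only [u, h, map_smul, smul_apply, smul_eq_mul]
    push_cast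
    field_simp
  simp_rw [hscale, rpow_sum_norm_smul_rpow hp, RCLike.norm_ofReal,
    abs_of_nonneg (mul_nonneg (norm_nonneg g) (norm_nonneg x))]
  exact mul_le_mul_of_nonneg_left (rpow_sum_le_jointNumRadius hp T hpair) (by positivity)

end JointNorms

namespace WithLp

variable {𝕜 Y V : Type*} [RCLike 𝕜] [NormedAddCommGroup Y] [NormedSpace 𝕜 Y]
  [NormedAddCommGroup V] [NormedSpace 𝕜 V] (q : ℝ≥0∞)

variable (𝕜) in
def inlL : Y →L[𝕜] WithLp q (Y × V) :=
  (prodContinuousLinearEquiv q 𝕜 Y V).symm.toContinuousLinearMap ∘L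
    ContinuousLinearMap.inl 𝕜 Y V

variable (𝕜) in
def inrL : V →L[𝕜] WithLp q (Y × V) :=
  (prodContinuousLinearEquiv q 𝕜 Y V).symm.toContinuousLinearMap ∘L
    ContinuousLinearMap.inr 𝕜 Y V

@[simp] lemma inlL_apply (y : Y) : inlL 𝕜 q (V := V) y = toLp q (y, 0) := rfl

@[simp] lemma inrL_apply (v : V) : inrL 𝕜 q (Y := Y) v = toLp q (0, v) := rfl

variable (V) in
def extendByZero (A : Y →L[𝕜] Y) : WithLp q (Y × V) →L[𝕜] WithLp q (Y × V) :=
  inlL 𝕜 q ∘L A ∘L fstL q 𝕜 Y V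

@[simp] lemma extendByZero_apply (A : Y →L[𝕜] Y) (z : WithLp q (Y × V)) :
    extendByZero V q A z = toLp q (A z.fst, 0) := rfl

variable [Fact (1 ≤ q)]

lemma prod_norm_toLp_mono {y₁ y₂ : Y} {v₁ v₂ : V} (hy : ‖y₁‖ ≤ ‖y₂‖) (hv : ‖v₁‖ ≤ ‖v₂‖) :
    ‖toLp q (y₁, v₁)‖ ≤ ‖toLp q (y₂, v₂)‖ := by
  rcases eq_or_ne q ∞ with rfl | hq
  · simpa only [prod_norm_eq_sup, toLp_fst, toLp_snd] using sup_le_sup hy hv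
  have hq0 : 0 < q.toReal :=
    ENNReal.toReal_pos (zero_lt_one.trans_le (Fact.out : 1 ≤ q)).ne' hq
  simp only [prod_norm_eq_add hq0, toLp_fst, toLp_snd]
  gcongr

lemma norm_comp_inlL_mul_add_le (f : WithLp q (Y × V) →L[𝕜] 𝕜) (y : Y) (v : V) :
    ‖f ∘L inlL 𝕜 q‖ * ‖y‖ + ‖f ∘L inrL 𝕜 q‖ * ‖v‖ ≤ ‖f‖ * ‖toLp q (y, v)‖ := by
  set g := f ∘L inlL 𝕜 q
  set h := f ∘L inrL 𝕜 q
  set C := ‖f‖ * ‖toLp q (y, v)‖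
  have hpoint : ∀ w u, ‖w‖ ≤ 1 → ‖u‖ ≤ 1 → ‖g w‖ * ‖y‖ + ‖h u‖ * ‖v‖ ≤ C := by
    intro w u hw hu
    obtain ⟨θ₁, hθ₁, hgw⟩ := RCLike.exists_norm_eq_mul_self (g w)
    obtain ⟨θ₂, hθ₂, hhu⟩ := RCLike.exists_norm_eq_mul_self (h u)
    -- rotate `w` and `u` so that `f` is real and nonnegative on the test vector
    set ζ := toLp q ((θ₁ * ‖y‖) • w, (θ₂ * ‖v‖) • u)
    have hζ : ‖ζ‖ ≤ ‖toLp q (y, v)‖ := by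
      apply prod_norm_toLp_mono q <;>
        simpa [norm_smul, hθ₁, hθ₂] using mul_le_of_le_one_right (norm_nonneg _) ‹_›
    have hfζ : f ζ = ((‖g w‖ * ‖y‖ + ‖h u‖ * ‖v‖ : ℝ) : 𝕜) := by
      have : ζ = (θ₁ * ‖y‖) • inlL 𝕜 q w + (θ₂ * ‖v‖) • inrL 𝕜 q u := by
        simp [ζ, ← toLp_smul, ← toLp_add]
      rw [this, map_add, map_smul, map_smul]
      simp only [g, h, ContinuousLinearMap.comp_apply, smul_eq_mul] at hgw hhu ⊢
      push_cast
      linear_combination -(‖y‖ : 𝕜) * hgw - (‖v‖ : 𝕜) * hhu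
    calc ‖g w‖ * ‖y‖ + ‖h u‖ * ‖v‖ = ‖f ζ‖ := by
          rw [hfζ, RCLike.norm_ofReal, abs_of_nonneg (by positivity)]
      _ ≤ C := f.le_opNorm_of_le hζ
  have hg : ∀ u, ‖u‖ ≤ 1 → ‖g‖ * ‖y‖ + ‖h u‖ * ‖v‖ ≤ C := by
    intro u hu
    have hC : 0 ≤ C - ‖h u‖ * ‖v‖ := by simpa using hpoint 0 u (by simp) hu
    have hyg := ContinuousLinearMap.opNorm_le_of_unit_norm hC (f := (‖y‖ : 𝕜) • g)
      fun w hw => by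
        simpa [norm_smul, mul_comm, le_sub_iff_add_le] using hpoint w u hw.le hu
    rw [norm_smul, RCLike.norm_ofReal, abs_norm] at hyg
    linarith
  have hC : 0 ≤ C - ‖g‖ * ‖y‖ := by simpa using hg 0 (by simp)
  have hvh := ContinuousLinearMap.opNorm_le_of_unit_norm hC (f := (‖v‖ : 𝕜) • h)
    fun u hu => by
      simpa [norm_smul, mul_comm, le_sub_iff_add_le'] using hg u hu.le
  rw [norm_smul, RCLike.norm_ofReal, abs_norm] at hvh
  linarith

lemma comp_inlL_apply_fst_of_mem_dualPairs {z : WithLp q (Y × V)} {f : WithLp q (Y × V) →L[𝕜] 𝕜}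
    (hzf : (z, f) ∈ dualPairs 𝕜 (WithLp q (Y × V))) :
    (f ∘L inlL 𝕜 q) z.fst = ((‖f ∘L inlL 𝕜 q‖ * ‖z.fst‖ : ℝ) : 𝕜) ∧
      ‖f ∘L inlL 𝕜 q‖ * ‖z.fst‖ ≤ 1 := by
  obtain ⟨hz, hf, hfz⟩ : ‖z‖ = 1 ∧ ‖f‖ = 1 ∧ f z = 1 := hzf
  set g := f ∘L inlL 𝕜 q
  set h := f ∘L inrL 𝕜 q
  have hsum : g z.fst + h z.snd = 1 := by
    have hz' : inlL 𝕜 q z.fst + inrL 𝕜 q z.snd = z := by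
      simp only [inlL_apply, inrL_apply, ← toLp_add, Prod.mk_add_mk, add_zero, zero_add]
      rfl
    rw [← hfz, ← hz']
    simp [g, h]
  have hholder : ‖g‖ * ‖z.fst‖ + ‖h‖ * ‖z.snd‖ ≤ 1 := by
    have := norm_comp_inlL_mul_add_le q f z.fst z.snd
    rwa [show toLp q (z.fst, z.snd) = z from rfl, hz, hf, one_mul] at this
  have hre := congrArg RCLike.re hsum
  rw [map_add, RCLike.one_re] at hre
  have hg := g.le_opNorm z.fst
  have hh := (RCLike.re_le_norm (h z.snd)).trans (h.le_opNorm z.snd)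
  have hgre : ‖g z.fst‖ ≤ RCLike.re (g z.fst) := by linarith
  have hnonneg : 0 ≤ ‖h‖ * ‖z.snd‖ := by positivity
  refine ⟨?_, by linarith⟩
  rw [← RCLike.re_eq_self_of_le hgre]
  congr 1
  linarith [RCLike.re_le_norm (g z.fst)]

end WithLp

section ExtendByZero

variable {𝕜 Y V : Type*} [RCLike 𝕜] [NormedAddCommGroup Y] [NormedSpace 𝕜 Y]
  [NormedAddCommGroup V] [NormedSpace 𝕜 V] (q : ℝ≥0∞) [Fact (1 ≤ q)] {p : ℝ} {k : ℕ}

lemma jointOpNorm_extendByZero (hp : 0 < p) (A : Fin k → Y →L[𝕜] Y) :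
    jointOpNorm p (fun i => extendByZero V q (A i)) = jointOpNorm p A := by
  have hnorm : ∀ i z, ‖extendByZero V q (A i) z‖ = ‖A i z.fst‖ :=
    fun i z => norm_toLp_fst q Y V _
  apply le_antisymm
  · refine Real.sSup_le ?_ (jointOpNorm_nonneg p A)
    rintro r ⟨z, hz, rfl⟩
    simp_rw [hnorm]
    calc _ ≤ jointOpNorm p A * ‖z.fst‖ := rpow_sum_le_jointOpNorm_mul hp A z.fst
      _ ≤ jointOpNorm p A :=
        mul_le_of_le_one_right (jointOpNorm_nonneg p A) (hz ▸ norm_fst_le Y z)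
  · refine Real.sSup_le ?_ (jointOpNorm_nonneg p _)
    rintro r ⟨y, hy, rfl⟩
    simpa [hnorm] using rpow_sum_le_jointOpNorm hp (fun i => extendByZero V q (A i))
      (x := toLp q (y, 0)) (by rw [norm_toLp_fst, hy])

lemma jointNumRadius_extendByZero (hp : 0 < p) (A : Fin k → Y →L[𝕜] Y) :
    jointNumRadius p (fun i => extendByZero V q (A i)) = jointNumRadius p A := by
  apply le_antisymm
  · refine Real.sSup_le ?_ (jointNumRadius_nonneg p A)
    rintro r ⟨⟨z, f⟩, hzf, rfl⟩
    obtain ⟨haligned, hle⟩ := comp_inlL_apply_fst_of_mem_dualPairs q hzf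
    calc _ ≤ ‖f ∘L inlL 𝕜 q‖ * ‖z.fst‖ * jointNumRadius p A :=
          rpow_sum_le_jointNumRadius_mul hp A haligned
      _ ≤ jointNumRadius p A := mul_le_of_le_one_left (jointNumRadius_nonneg p A) hle
  · refine Real.sSup_le ?_ (jointNumRadius_nonneg p _)
    rintro r ⟨⟨y, g⟩, ⟨hy, hg, hgy⟩, rfl⟩
    have hfst : ‖fstL q 𝕜 Y V‖ ≤ 1 :=
      ContinuousLinearMap.opNorm_le_bound _ zero_le_one fun z => by simpa using norm_fst_le Y z
    have hpair : (toLp q (y, (0 : V)), g ∘L fstL q 𝕜 Y V) ∈ dualPairs 𝕜 (WithLp q (Y × V)) :=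
      mem_dualPairs_of_norm_le_one (by rw [norm_toLp_fst, hy])
        ((g.opNorm_comp_le _).trans (by simpa [hg] using hfst)) hgy
    simpa using rpow_sum_le_jointNumRadius hp (fun i => extendByZero V q (A i)) hpair

end ExtendByZero

theorem stmt13_general {𝕜 Y V : Type*} [RCLike 𝕜]
    [NormedAddCommGroup Y] [NormedSpace 𝕜 Y]
    [NormedAddCommGroup V] [NormedSpace 𝕜 V]
    (q : ℝ≥0∞) [Fact (1 ≤ q)] {p : ℝ} (hp : 1 ≤ p) {k : ℕ}
    (A : Fin k → Y →L[𝕜] Y) (hA : jointOpNorm p A = 1)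
    (T : Fin k → WithLp q (Y × V) →L[𝕜] WithLp q (Y × V))
    (hT : ∀ (i : Fin k) (z : WithLp q (Y × V)),
      T i z = (WithLp.equiv q (Y × V)).symm (A i ((WithLp.equiv q (Y × V)) z).1, 0)) :
    jointOpNorm p T = 1 ∧ jointNumRadius p T = jointNumRadius p A ∧
    jointNumIndex p k 𝕜 (WithLp q (Y × V)) ≤ jointNumIndex p k 𝕜 Y := by
  have hp0 : 0 < p := zero_lt_one.trans_le hp
  obtain rfl : T = fun i => extendByZero V q (A i) :=
    funext fun i => ContinuousLinearMap.ext (hT i)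
  refine ⟨(jointOpNorm_extendByZero q hp0 A).trans hA,
    jointNumRadius_extendByZero q hp0 A, ?_⟩
  refine csInf_le_csInf ⟨0, ?_⟩ ⟨_, A, hA, rfl⟩ ?_
  · rintro r ⟨S, -, rfl⟩
    exact jointNumRadius_nonneg p S
  · rintro r ⟨B, hB, rfl⟩
    exact ⟨_, (jointOpNorm_extendByZero q hp0 B).trans hB,
      (jointNumRadius_extendByZero q hp0 B).symm⟩

theorem stmt13 {𝕜 Y V : Type*} [RCLike 𝕜]
    [NormedAddCommGroup Y] [NormedSpace 𝕜 Y] [CompleteSpace Y]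
    [NormedAddCommGroup V] [NormedSpace 𝕜 V] [CompleteSpace V]
    (q : ℝ≥0∞) [Fact (1 ≤ q)] {p : ℝ} (hp : 1 ≤ p) {k : ℕ}
    (A : Fin k → Y →L[𝕜] Y) (hA : jointOpNorm p A = 1)
    (T : Fin k → WithLp q (Y × V) →L[𝕜] WithLp q (Y × V))
    (hT : ∀ (i : Fin k) (z : WithLp q (Y × V)),
      T i z = (WithLp.equiv q (Y × V)).symm (A i ((WithLp.equiv q (Y × V)) z).1, 0)) :
    jointOpNorm p T = 1 ∧ jointNumRadius p T = jointNumRadius p A ∧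
    jointNumIndex p k 𝕜 (WithLp q (Y × V)) ≤ jointNumIndex p k 𝕜 Y :=
  stmt13_general q hp A hA T hT
end
end

section
/- Let ℓ₂³ be the 3-dimensional complex Hilbert space, p > 2, and define T₁(x,y,z) = (z/2^{1/p}, 0, 0), T₂(x,y,z) = (0, z/2^{1/p}, 0). Then for 𝒯 = (T₁,T₂): ‖𝒯‖_p = 1 and w_p(𝒯) = 1/2^{1+1/p}. Consequently n_{(p,2)}(ℓ₂^m) = 1/2^{1+1/p} for all m ≥ 3, and n_{(p,2)}(ℓ₂) = 1/2^{1+1/p}. -/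
open scoped ENNReal

noncomputable section

/-!
In a complex Hilbert space the numerical radius controls the norm, `‖T‖ ≤ 2 w(T)`, by
polarization. Each `w(Tᵢ)` is at most `w_p(T₁, T₂)`, hence `‖(T₁, T₂)‖_p ≤ 2^(1/p) · 2 w_p(T₁, T₂)`,
which gives `n_(p,2) ≥ 1 / 2^(1+1/p)` for every complex Hilbert space.

For the pair `Tᵢ x = ⟪e₂, x⟫ / 2^(1/p) · eᵢ` one has `‖(T₁ x, T₂ x)‖_p = |⟪e₂, x⟫|`, so the joint
norm is `1`. Writing `xᵢ = ⟪eᵢ, x⟫` for a unit vector `x`,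
`(∑ |⟪x, Tᵢ x⟫|^p)^(1/p) = |x₂| ‖(x₀, x₁)‖_p / 2^(1/p) ≤ |x₂| ‖(x₀, x₁)‖₂ / 2^(1/p) ≤ 1 / 2^(1+1/p)`
because `p ≥ 2`, Bessel's inequality and AM–GM, with equality at `x = (e₀ + e₂) / √2`. Every space
with an orthonormal triple, in particular `ℓ₂^m` for `m ≥ 3` and `ℓ₂`, carries this pair, so the
lower bound is attained there.
-/

open scoped ComplexInnerProductSpace

lemma le_sum_rpow_rpow_one_div {ι : Type*} [Fintype ι] {p : ℝ} (hp : 0 < p) {a : ι → ℝ}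
    (ha : ∀ i, 0 ≤ a i) (i : ι) : a i ≤ (∑ j, a j ^ p) ^ (1 / p) := by
  calc a i = (a i ^ p) ^ (1 / p) := by rw [one_div, Real.rpow_rpow_inv (ha i) hp.ne']
    _ ≤ (∑ j, a j ^ p) ^ (1 / p) := by
      gcongr
      · exact Real.rpow_nonneg (ha i) p
      · exact Finset.single_le_sum (f := fun j ↦ a j ^ p)
          (fun j _ ↦ Real.rpow_nonneg (ha j) p) (Finset.mem_univ i)

lemma sum_rpow_rpow_one_div_le {ι : Type*} [Fintype ι] {p M : ℝ} (hp : 0 < p) (hM : 0 ≤ M)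
    {a : ι → ℝ} (ha : ∀ i, 0 ≤ a i) (haM : ∀ i, a i ≤ M) :
    (∑ i, a i ^ p) ^ (1 / p) ≤ (Fintype.card ι : ℝ) ^ (1 / p) * M := by
  calc (∑ i, a i ^ p) ^ (1 / p) ≤ (∑ _i : ι, M ^ p) ^ (1 / p) := by
        gcongr with i
        · exact Finset.sum_nonneg fun i _ ↦ Real.rpow_nonneg (ha i) p
        · exact ha i
        · exact haM i
    _ = (Fintype.card ι : ℝ) ^ (1 / p) * M := by
        rw [Finset.sum_const, Finset.card_univ, nsmul_eq_mul,
          Real.mul_rpow (by positivity) (by positivity), one_div, Real.rpow_rpow_inv hM hp.ne']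

lemma jointOpNorm_le_of_norm_le {𝕜 X Y : Type*} [RCLike 𝕜] [NormedAddCommGroup X]
    [NormedSpace 𝕜 X] [NormedAddCommGroup Y] [NormedSpace 𝕜 Y] {p M : ℝ} (hp : 0 < p)
    (hM : 0 ≤ M) {k : ℕ} (T : Fin k → X →L[𝕜] Y) (hT : ∀ i, ‖T i‖ ≤ M) :
    jointOpNorm p T ≤ (k : ℝ) ^ (1 / p) * M := by
  refine Real.sSup_le ?_ (by positivity)
  rintro r ⟨x, hx, rfl⟩
  simpa using sum_rpow_rpow_one_div_le hp hM (fun i ↦ norm_nonneg (T i x))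
    fun i ↦ ((T i).le_opNorm x).trans (by rw [hx, mul_one]; exact hT i)

section InnerProductSpace

variable {H : Type*} [NormedAddCommGroup H] [InnerProductSpace ℂ H]

theorem ContinuousLinearMap.norm_le_two_mul_of_norm_inner_self_le (T : H →L[ℂ] H) {w : ℝ}
    (hw0 : 0 ≤ w) (hw : ∀ x : H, ‖x‖ = 1 → ‖⟪x, T x⟫‖ ≤ w) : ‖T‖ ≤ 2 * w := by
  have hquad : ∀ z : H, ‖⟪T z, z⟫‖ ≤ w * ‖z‖ ^ 2 := by
    intro z
    rcases eq_or_ne z 0 with rfl | hz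
    · simp
    have hz' : 0 < ‖z‖ := norm_pos_iff.mpr hz
    have hunit : ‖((‖z‖⁻¹ : ℝ) : ℂ) • z‖ = 1 := by
      rw [norm_smul, Complex.norm_real, Real.norm_of_nonneg (by positivity),
        inv_mul_cancel₀ hz'.ne']
    have h := hw _ hunit
    rw [map_smul, inner_smul_left, inner_smul_right, norm_mul, norm_mul, Complex.conj_ofReal,
      Complex.norm_real, Real.norm_of_nonneg (by positivity), norm_inner_symm] at h
    calc ‖⟪T z, z⟫‖ = ‖z‖ ^ 2 * (‖z‖⁻¹ * (‖z‖⁻¹ * ‖⟪T z, z⟫‖)) := by field_simp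
      _ ≤ ‖z‖ ^ 2 * w := by gcongr
      _ = w * ‖z‖ ^ 2 := mul_comm _ _
  -- polarization, together with the parallelogram law for the pairs `x, y` and `x, I • y`
  have hpol : ∀ x y : H, ‖⟪T x, y⟫‖ ≤ w * (‖x‖ ^ 2 + ‖y‖ ^ 2) := by
    intro x y
    have h4 : 4 * ‖⟪T x, y⟫‖ ≤ w * (‖x + y‖ ^ 2 + ‖x - y‖ ^ 2 +
        (‖x + Complex.I • y‖ ^ 2 + ‖x - Complex.I • y‖ ^ 2)) := by
      have hpolar := inner_map_polarization' (T : H →ₗ[ℂ] H) x y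
      simp only [ContinuousLinearMap.coe_coe] at hpolar
      rw [hpolar, norm_div, Complex.norm_ofNat, mul_div_cancel₀ _ four_ne_zero]
      refine (norm_add_le _ _).trans ?_
      grw [norm_sub_le, norm_sub_le, norm_mul, norm_mul, Complex.norm_I, one_mul, one_mul,
        hquad, hquad, hquad, hquad]
      linarith
    have hxy := parallelogram_law_with_norm ℂ x y
    have hxIy := parallelogram_law_with_norm ℂ x (Complex.I • y)
    rw [norm_smul, Complex.norm_I, one_mul] at hxIy
    nlinarith
  refine T.opNorm_le_of_re_inner_le (by positivity) fun x y hx hy ↦ ?_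
  calc RCLike.re ⟪T x, y⟫ ≤ ‖⟪T x, y⟫‖ := RCLike.re_le_norm _
    _ ≤ w * (‖x‖ ^ 2 + ‖y‖ ^ 2) := hpol x y
    _ = 2 * w := by rw [hx, hy]; ring

variable [CompleteSpace H]

/-- By the Riesz representation theorem and the equality case of Cauchy–Schwarz, the only norming
functional of a unit vector `x` is `⟪x, ·⟫`. -/
lemma mem_dualPairs_iff {q : H × (H →L[ℂ] ℂ)} :
    q ∈ dualPairs ℂ H ↔ ‖q.1‖ = 1 ∧ q.2 = innerSL ℂ q.1 := by
  constructor
  · rintro ⟨hx, hf, hfx⟩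
    set u := (InnerProductSpace.toDual ℂ H).symm q.2
    have hq2 : InnerProductSpace.toDual ℂ H u = q.2 := by simp [u]
    have hu : ‖u‖ = 1 := by rw [LinearIsometryEquiv.norm_map, hf]
    have hux : u = q.1 := by
      rw [← inner_eq_one_iff_of_norm_eq_one (𝕜 := ℂ) hu hx,
        ← InnerProductSpace.toDual_apply_apply, hq2, hfx]
    exact ⟨hx, by rw [← hq2, hux]; rfl⟩
  · rintro ⟨hx, hf⟩
    refine ⟨hx, by rw [hf, innerSL_apply_norm, hx], ?_⟩
    rw [hf, innerSL_apply_apply, inner_self_eq_norm_sq_to_K, hx]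
    norm_num

lemma jointNumRadius_eq_sSup_inner (p : ℝ) {k : ℕ} (T : Fin k → H →L[ℂ] H) :
    jointNumRadius p T =
      sSup {r | ∃ x : H, ‖x‖ = 1 ∧ r = (∑ i, ‖⟪x, T i x⟫‖ ^ p) ^ (1 / p)} := by
  unfold jointNumRadius
  congr 1
  ext r
  constructor
  · rintro ⟨q, hq, rfl⟩
    obtain ⟨hx, hf⟩ := mem_dualPairs_iff.mp hq
    exact ⟨q.1, hx, by rw [hf]; rfl⟩
  · rintro ⟨x, hx, rfl⟩
    exact ⟨(x, innerSL ℂ x), mem_dualPairs_iff.mpr ⟨hx, rfl⟩, rfl⟩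

lemma norm_inner_le_jointNumRadius {p : ℝ} (hp : 0 < p) {k : ℕ} (T : Fin k → H →L[ℂ] H)
    {x : H} (hx : ‖x‖ = 1) (i : Fin k) : ‖⟪x, T i x⟫‖ ≤ jointNumRadius p T := by
  have hbdd : BddAbove
      {r | ∃ x : H, ‖x‖ = 1 ∧ r = (∑ i, ‖⟪x, T i x⟫‖ ^ p) ^ (1 / p)} := by
    refine ⟨(Fintype.card (Fin k) : ℝ) ^ (1 / p) * ∑ j, ‖T j‖, ?_⟩
    rintro r ⟨y, hy, rfl⟩
    refine sum_rpow_rpow_one_div_le hp (by positivity) (fun _ ↦ norm_nonneg _) fun j ↦ ?_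
    calc ‖⟪y, T j y⟫‖ ≤ ‖T j‖ := by
          simpa [hy] using (norm_inner_le_norm (𝕜 := ℂ) y (T j y)).trans
            (mul_le_mul_of_nonneg_left ((T j).le_opNorm y) (norm_nonneg y))
      _ ≤ ∑ j, ‖T j‖ :=
          Finset.single_le_sum (f := fun j ↦ ‖T j‖) (fun _ _ ↦ norm_nonneg _) (Finset.mem_univ j)
  rw [jointNumRadius_eq_sSup_inner]
  exact (le_sum_rpow_rpow_one_div hp (a := fun j ↦ ‖⟪x, T j x⟫‖) (fun _ ↦ norm_nonneg _) i).trans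
    (le_csSup hbdd ⟨x, hx, rfl⟩)

theorem jointOpNorm_le_two_mul_jointNumRadius {p : ℝ} (hp : 0 < p) {k : ℕ}
    (T : Fin k → H →L[ℂ] H) : jointOpNorm p T ≤ (k : ℝ) ^ (1 / p) * (2 * jointNumRadius p T) := by
  have hw0 : 0 ≤ jointNumRadius p T :=
    Real.sSup_nonneg (by rintro r ⟨q, -, rfl⟩; positivity)
  exact jointOpNorm_le_of_norm_le hp (by positivity) T fun i ↦
    (T i).norm_le_two_mul_of_norm_inner_self_le hw0 fun x hx ↦
      norm_inner_le_jointNumRadius hp T hx i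

theorem one_div_two_rpow_le_jointNumRadius {p : ℝ} (hp : 0 < p) (T : Fin 2 → H →L[ℂ] H)
    (hT : jointOpNorm p T = 1) : 1 / (2 : ℝ) ^ (1 + 1 / p) ≤ jointNumRadius p T := by
  have h := jointOpNorm_le_two_mul_jointNumRadius hp T
  rw [hT, Nat.cast_ofNat] at h
  rw [Real.rpow_add two_pos, Real.rpow_one, div_le_iff₀ (by positivity)]
  linarith

end InnerProductSpace

lemma mul_rpow_add_rpow_one_div_le_half {p a b d : ℝ} (hp : 2 ≤ p) (ha : 0 ≤ a) (hb : 0 ≤ b)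
    (hd : 0 ≤ d) (h : a ^ 2 + b ^ 2 + d ^ 2 ≤ 1) : d * (a ^ p + b ^ p) ^ (1 / p) ≤ 1 / 2 := by
  set s := Real.sqrt (a ^ 2 + b ^ 2)
  have hs : s ^ 2 = a ^ 2 + b ^ 2 := Real.sq_sqrt (by positivity)
  have hps : (a ^ p + b ^ p) ^ (1 / p) ≤ s := by
    have := Real.rpow_add_rpow_le ha hb two_pos hp
    rwa [Real.rpow_two, Real.rpow_two, ← Real.sqrt_eq_rpow] at this
  calc d * (a ^ p + b ^ p) ^ (1 / p) ≤ d * s := by gcongr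
    _ ≤ 1 / 2 := by nlinarith [sq_nonneg (d - s)]

section ExtremalPair

variable {H : Type*} [NormedAddCommGroup H] [InnerProductSpace ℂ H]

/-- The pair `(T₁, T₂)` of the theorem, written in an orthonormal triple `e` in place of the
standard basis of `ℓ₂³`. -/
def extremalPair (p : ℝ) (e : Fin 3 → H) : Fin 2 → H →L[ℂ] H :=
  fun i ↦ (innerSL ℂ (e 2)).smulRight ((((2 : ℝ) ^ (1 / p) : ℝ) : ℂ)⁻¹ • e i.castSucc)

lemma extremalPair_apply (p : ℝ) (e : Fin 3 → H) (i : Fin 2) (x : H) :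
    extremalPair p e i x = (⟪e 2, x⟫ / (((2 : ℝ) ^ (1 / p) : ℝ) : ℂ)) • e i.castSucc := by
  simp [extremalPair, smul_smul, div_eq_mul_inv]

lemma norm_extremalPair_apply {p : ℝ} {e : Fin 3 → H} (he : Orthonormal ℂ e) (i : Fin 2)
    (x : H) : ‖extremalPair p e i x‖ = ‖⟪e 2, x⟫‖ / (2 : ℝ) ^ (1 / p) := by
  rw [extremalPair_apply, norm_smul, he.1, mul_one, norm_div, Complex.norm_real,
    Real.norm_of_nonneg (by positivity)]

theorem jointOpNorm_extremalPair {p : ℝ} (hp : 0 < p) {e : Fin 3 → H} (he : Orthonormal ℂ e) :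
    jointOpNorm p (extremalPair p e) = 1 := by
  have hsum : ∀ x : H, (∑ i, ‖extremalPair p e i x‖ ^ p) ^ (1 / p) = ‖⟪e 2, x⟫‖ := by
    intro x
    simp only [norm_extremalPair_apply he, Finset.sum_const, Finset.card_univ, Fintype.card_fin,
      nsmul_eq_mul]
    rw [Real.div_rpow (norm_nonneg _) (by positivity), one_div, Real.rpow_inv_rpow zero_le_two
      hp.ne', Nat.cast_ofNat, mul_div_cancel₀ _ two_ne_zero, Real.rpow_rpow_inv (norm_nonneg _)
      hp.ne']
  refine IsGreatest.csSup_eq ⟨⟨e 2, he.1 2, ?_⟩, ?_⟩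
  · rw [hsum, inner_self_eq_norm_sq_to_K, he.1 2]
    simp
  · rintro r ⟨x, hx, rfl⟩
    rw [hsum]
    simpa [he.1 2, hx] using norm_inner_le_norm (𝕜 := ℂ) (e 2) x

lemma sum_norm_inner_extremalPair_rpow {p : ℝ} (hp : 0 < p) (e : Fin 3 → H) (x : H) :
    (∑ i, ‖⟪x, extremalPair p e i x⟫‖ ^ p) ^ (1 / p) =
      ‖⟪e 2, x⟫‖ * (‖⟪e 0, x⟫‖ ^ p + ‖⟪e 1, x⟫‖ ^ p) ^ (1 / p) / (2 : ℝ) ^ (1 / p) := by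
  have hterm : ∀ i : Fin 2,
      ‖⟪x, extremalPair p e i x⟫‖ = ‖⟪e 2, x⟫‖ / (2 : ℝ) ^ (1 / p) * ‖⟪e i.castSucc, x⟫‖ := by
    intro i
    rw [extremalPair_apply, inner_smul_right, norm_mul, norm_div, Complex.norm_real,
      Real.norm_of_nonneg (by positivity), norm_inner_symm x]
  rw [Fin.sum_univ_two, hterm, hterm, Real.mul_rpow (by positivity) (norm_nonneg _),
    Real.mul_rpow (by positivity) (norm_nonneg _), ← mul_add,
    Real.mul_rpow (by positivity) (by positivity), one_div, Real.rpow_rpow_inv (by positivity)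
      hp.ne']
  simp only [Fin.castSucc_zero, Fin.castSucc_one]
  ring

lemma sum_norm_inner_extremalPair_rpow_le {p : ℝ} (hp : 2 ≤ p) {e : Fin 3 → H}
    (he : Orthonormal ℂ e) {x : H} (hx : ‖x‖ = 1) :
    (∑ i, ‖⟪x, extremalPair p e i x⟫‖ ^ p) ^ (1 / p) ≤ 1 / (2 * (2 : ℝ) ^ (1 / p)) := by
  have hbessel := he.sum_inner_products_le (s := Finset.univ) x
  rw [Fin.sum_univ_three, hx, one_pow] at hbessel
  rw [sum_norm_inner_extremalPair_rpow (by linarith),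
    div_le_div_iff₀ (by positivity) (by positivity)]
  nlinarith [mul_rpow_add_rpow_one_div_le_half hp (norm_nonneg ⟪e 0, x⟫)
    (norm_nonneg ⟪e 1, x⟫) (norm_nonneg ⟪e 2, x⟫) (by linarith),
    Real.rpow_pos_of_pos two_pos (1 / p)]

lemma exists_sum_norm_inner_extremalPair_rpow_eq {p : ℝ} (hp : 0 < p) {e : Fin 3 → H}
    (he : Orthonormal ℂ e) :
    ∃ x : H, ‖x‖ = 1 ∧
      (∑ i, ‖⟪x, extremalPair p e i x⟫‖ ^ p) ^ (1 / p) = 1 / (2 * (2 : ℝ) ^ (1 / p)) := by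
  set t : ℝ := (Real.sqrt 2)⁻¹
  have ht : t * t = 1 / 2 := by
    rw [← mul_inv, Real.mul_self_sqrt zero_le_two, one_div]
  have hie := orthonormal_iff_ite.mp he
  have hinner : ∀ i, ⟪e i, (t : ℂ) • (e 0 + e 2)⟫ = t * (⟪e i, e 0⟫ + ⟪e i, e 2⟫) := fun i ↦ by
    rw [inner_smul_right, inner_add_right]
  have h0 : ⟪e 0, (t : ℂ) • (e 0 + e 2)⟫ = t := by rw [hinner]; simp [hie, he.1, Fin.ext_iff]
  have h1 : ⟪e 1, (t : ℂ) • (e 0 + e 2)⟫ = 0 := by rw [hinner]; simp [hie, Fin.ext_iff]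
  have h2 : ⟪e 2, (t : ℂ) • (e 0 + e 2)⟫ = t := by rw [hinner]; simp [hie, he.1, Fin.ext_iff]
  refine ⟨(t : ℂ) • (e 0 + e 2), ?_, ?_⟩
  · have h02 : ‖e 0 + e 2‖ = Real.sqrt 2 := by
      rw [← Real.sqrt_mul_self (norm_nonneg _),
        norm_add_sq_eq_norm_sq_add_norm_sq_of_inner_eq_zero (𝕜 := ℂ) _ _
          (by simp [hie, Fin.ext_iff]), he.1, he.1]
      norm_num
    rw [norm_smul, Complex.norm_real, Real.norm_of_nonneg (by positivity), h02,
      inv_mul_cancel₀ (by positivity)]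
  · rw [sum_norm_inner_extremalPair_rpow hp, h0, h1, h2, norm_zero, Real.zero_rpow hp.ne',
      add_zero, Complex.norm_real, Real.norm_of_nonneg (by positivity), one_div p,
      Real.rpow_rpow_inv (by positivity) hp.ne', ht]
    ring

theorem jointNumRadius_extremalPair {p : ℝ} (hp : 2 ≤ p) {e : Fin 3 → H}
    (he : Orthonormal ℂ e) [CompleteSpace H] :
    jointNumRadius p (extremalPair p e) = 1 / (2 : ℝ) ^ (1 + 1 / p) := by
  rw [jointNumRadius_eq_sSup_inner, Real.rpow_add two_pos, Real.rpow_one]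
  obtain ⟨x, hx, hmax⟩ := exists_sum_norm_inner_extremalPair_rpow_eq (by linarith) he
  refine IsGreatest.csSup_eq ⟨⟨x, hx, hmax.symm⟩, ?_⟩
  rintro r ⟨y, hy, rfl⟩
  exact sum_norm_inner_extremalPair_rpow_le hp he hy

theorem jointNumIndex_eq_of_orthonormal {p : ℝ} (hp : 2 ≤ p) [CompleteSpace H] {e : Fin 3 → H}
    (he : Orthonormal ℂ e) : jointNumIndex p 2 ℂ H = 1 / (2 : ℝ) ^ (1 + 1 / p) := by
  have hp0 : 0 < p := by linarith
  refine IsLeast.csInf_eq ⟨⟨extremalPair p e, jointOpNorm_extremalPair hp0 he,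
    (jointNumRadius_extremalPair hp he).symm⟩, ?_⟩
  rintro r ⟨T, hT, rfl⟩
  exact one_div_two_rpow_le_jointNumRadius hp0 T hT

end ExtremalPair

theorem stmt19 {p : ℝ} (hp : 2 < p)
    (T₁ T₂ : EuclideanSpace ℂ (Fin 3) →L[ℂ] EuclideanSpace ℂ (Fin 3))
    (hT₁ : ∀ (v : EuclideanSpace ℂ (Fin 3)) (j : Fin 3),
      T₁ v j = if j = 0 then v 2 / (((2 : ℝ) ^ (1 / p) : ℝ) : ℂ) else 0)
    (hT₂ : ∀ (v : EuclideanSpace ℂ (Fin 3)) (j : Fin 3),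
      T₂ v j = if j = 1 then v 2 / (((2 : ℝ) ^ (1 / p) : ℝ) : ℂ) else 0) :
    jointOpNorm p ![T₁, T₂] = 1 ∧
    jointNumRadius p ![T₁, T₂] = 1 / (2 : ℝ) ^ (1 + 1 / p) ∧
    (∀ m : ℕ, 3 ≤ m →
      jointNumIndex p 2 ℂ (EuclideanSpace ℂ (Fin m)) = 1 / (2 : ℝ) ^ (1 + 1 / p)) ∧
    jointNumIndex p 2 ℂ (lp (fun _ : ℕ => ℂ) 2) = 1 / (2 : ℝ) ^ (1 + 1 / p) := by
  set e := EuclideanSpace.basisFun (Fin 3) ℂ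
  have hT : ![T₁, T₂] = extremalPair p e := by
    funext i
    ext v j
    fin_cases i <;> simp [extremalPair_apply, hT₁, hT₂, e, EuclideanSpace.inner_single_left]
  refine ⟨hT ▸ jointOpNorm_extremalPair (by linarith) e.orthonormal,
    hT ▸ jointNumRadius_extremalPair hp.le e.orthonormal, fun m hm ↦ ?_, ?_⟩
  · exact jointNumIndex_eq_of_orthonormal hp.le
      ((EuclideanSpace.basisFun (Fin m) ℂ).orthonormal.comp _ (Fin.castLE_injective hm))
  · exact jointNumIndex_eq_of_orthonormal hp.le
      ((default : HilbertBasis ℕ ℂ (lp (fun _ : ℕ => ℂ) 2)).orthonormal.comp _ Fin.val_injective)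
end
end
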